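/- arXiv:1607.03424 — 3 statements merged into one kernel-verified Lean document; each statement's English description precedes it below -/
import Mathlib

section
/- Let C be a commutative ring, R an associative unital C-algebra, and T : R → R → C a C-bilinear symmetric nondegenerate form. Let v_1, …, v_n ∈ R, let g be their Gram matrix (entries g_{ij} = T(v_i, v_j)), and set c = det g ∈ C. If the family v_1, …, v_n exhausts T and c is not nilpotent in C, then the images of v_1, …, v_n in the localized module R_c (the localization of the C-module R at the multiplicative set of powers of c) form a basis of R_c as a module over the localized ring C_c = C[c⁻¹]. -/
/-!
Let `Ψ : Cⁿ → R` send `u` to `∑ uᵢ • vᵢ` and `Φ : R → Cⁿ` send `r` to `(T vⱼ r)ⱼ`, so that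
`Φ ∘ Ψ` is multiplication by the Gram matrix `g`. Exhaustion says that `Φ` is injective, and then
`adj g ∘ Φ` is an inverse of `Ψ` up to the factor `c = det g` on both sides. Once `c` is inverted,
`Ψ` becomes an isomorphism `C_cⁿ ≃ R_c` carrying the standard basis to the images of the `vᵢ`.
-/

namespace LocalizedModule

variable {C M N : Type*} [CommRing C] [AddCommGroup M] [Module C M] [AddCommGroup N] [Module C N]

theorem map_map_of_comp_eq_smul (S : Submonoid C) {c : C} {f : M →ₗ[C] N} {g : N →ₗ[C] M}
    (hgf : g ∘ₗ f = c • LinearMap.id) (x : LocalizedModule S M) :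
    map S g (map S f x) = c • x := by
  induction x using induction_on with
  | h m s => rw [map_mk, map_mk, ← LinearMap.comp_apply, hgf, smul'_mk]; rfl

theorem smul_bijective_of_powers (c : C) :
    Function.Bijective fun x : LocalizedModule (Submonoid.powers c) M => c • x :=
  (Module.End.isUnit_iff _).1 <|
    IsLocalizedModule.map_units (mkLinearMap (Submonoid.powers c) M) ⟨c, Submonoid.mem_powers c⟩

theorem bijective_map_of_comp_eq_smul {c : C} {f : M →ₗ[C] N} {g : N →ₗ[C] M}
    (hgf : g ∘ₗ f = c • LinearMap.id) (hfg : f ∘ₗ g = c • LinearMap.id) :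
    Function.Bijective (map (Submonoid.powers c) f) := by
  refine ⟨fun x y hxy => (smul_bijective_of_powers c).1 ?_, fun y => ?_⟩
  · simp only [← map_map_of_comp_eq_smul _ hgf, hxy]
  · obtain ⟨y', rfl⟩ := (smul_bijective_of_powers c).2 y
    exact ⟨map _ g y', map_map_of_comp_eq_smul _ hfg y'⟩

end LocalizedModule

section Gram

variable {C M ι : Type*} [CommRing C] [AddCommGroup M] [Module C M] [Fintype ι]

theorem LinearMap.pi_comp_linearCombination (T : M →ₗ[C] M →ₗ[C] C) (v : ι → M) :
    LinearMap.pi (fun j => T (v j)) ∘ₗ Fintype.linearCombination C v =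
      (Matrix.of fun j i => T (v j) (v i)).mulVecLin := by
  ext u j
  simp [Fintype.linearCombination_apply, Matrix.mulVec, dotProduct, mul_comm]

variable [DecidableEq ι] {A : Matrix ι ι C} {φ : M →ₗ[C] ι → C} {ψ : (ι → C) →ₗ[C] M}

theorem Matrix.mulVecLin_adjugate_comp_comp_eq_det_smul (hA : φ ∘ₗ ψ = A.mulVecLin) :
    A.adjugate.mulVecLin ∘ₗ φ ∘ₗ ψ = A.det • LinearMap.id := by
  refine LinearMap.ext fun u => ?_
  simp [hA, Matrix.mulVec_mulVec, Matrix.adjugate_mul, Matrix.smul_mulVec]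

theorem Matrix.comp_mulVecLin_adjugate_comp_eq_det_smul (hA : φ ∘ₗ ψ = A.mulVecLin)
    (hφ : Function.Injective φ) :
    ψ ∘ₗ A.adjugate.mulVecLin ∘ₗ φ = A.det • LinearMap.id := by
  ext r
  apply hφ
  have := congr($hA (A.adjugate.mulVec (φ r)))
  simpa [Matrix.mulVec_mulVec, Matrix.mul_adjugate, Matrix.smul_mulVec] using this

theorem exists_basis_localizedModule_of_comp_eq_smul {c : C} {v : ι → M}
    (hφ : Fintype.linearCombination C v ∘ₗ φ = c • LinearMap.id)
    (hφ' : φ ∘ₗ Fintype.linearCombination C v = c • LinearMap.id) :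
    ∃ b : Module.Basis ι (Localization (Submonoid.powers c))
        (LocalizedModule (Submonoid.powers c) M),
      ∀ i, b i = LocalizedModule.mkLinearMap (Submonoid.powers c) M (v i) := by
  set S := Submonoid.powers c
  let e := LinearEquiv.ofBijective (LocalizedModule.map S (Fintype.linearCombination C v))
    (LocalizedModule.bijective_map_of_comp_eq_smul hφ' hφ)
  refine ⟨((Pi.basisFun C ι).ofIsLocalizedModule (Localization S) S
    (LocalizedModule.mkLinearMap S (ι → C))).map e, fun i => ?_⟩
  simp [e]

end Gram

theorem basis_localizedModule_of_exhausts_of_not_isNilpotent_gram_det_general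
    (C R : Type*) [CommRing C] [Ring R] [Algebra C R]
    (T : R →ₗ[C] R →ₗ[C] C)
    (n : ℕ) (v : Fin n → R)
    (g : Matrix (Fin n) (Fin n) C)
    (hg : ∀ i j, g i j = T (v i) (v j))
    (hexh : ∀ r : R, r ≠ 0 → ∃ i, T (v i) r ≠ 0)
    (c : C) (hc : c = g.det) :
    ∃ b : Module.Basis (Fin n) (Localization (Submonoid.powers c))
        (LocalizedModule (Submonoid.powers c) R),
      ∀ i, b i = LocalizedModule.mkLinearMap (Submonoid.powers c) R (v i) := by
  subst hc
  have hgram : LinearMap.pi (fun j => T (v j)) ∘ₗ Fintype.linearCombination C v = g.mulVecLin := by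
    rw [LinearMap.pi_comp_linearCombination]
    exact congrArg Matrix.mulVecLin (Matrix.ext hg).symm
  have hinj : Function.Injective (LinearMap.pi fun j => T (v j)) := by
    refine (injective_iff_map_eq_zero _).2 fun r hr => ?_
    by_contra hr0
    obtain ⟨i, hi⟩ := hexh r hr0
    exact hi (congr_fun hr i)
  refine exists_basis_localizedModule_of_comp_eq_smul
    (Matrix.comp_mulVecLin_adjugate_comp_eq_det_smul hgram hinj) ?_
  rw [LinearMap.comp_assoc]
  exact Matrix.mulVecLin_adjugate_comp_comp_eq_det_smul hgram

/-- **Local Basis criterion (Theorem `exhaustbasis`).**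
Let `C` be a commutative ring, `R` an associative unital `C`-algebra, and
`T : R → R → C` a `C`-bilinear symmetric nondegenerate form.  Let `v 1, …, v n ∈ R`,
let `g` be their Gram matrix (entries `g i j = T (v i) (v j)`) and set `c = det g`.
If the family `v` exhausts `T` and `c` is not nilpotent in `C`, then the images of
the `v i` in the localized module `R_c` (the localization of the `C`-module `R` at
the powers of `c`) form a basis of `R_c` over the localized ring `C_c = C[c⁻¹]`. -/
theorem basis_localizedModule_of_exhausts_of_not_isNilpotent_gram_det
    (C R : Type*) [CommRing C] [Ring R] [Algebra C R]
    (T : R →ₗ[C] R →ₗ[C] C)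
    (hsymm : ∀ r s : R, T r s = T s r)
    (hnondeg : ∀ r : R, r ≠ 0 → ∃ s : R, T r s ≠ 0)
    (n : ℕ) (v : Fin n → R)
    (g : Matrix (Fin n) (Fin n) C)
    (hg : ∀ i j, g i j = T (v i) (v j))
    (hexh : ∀ r : R, r ≠ 0 → ∃ i, T (v i) r ≠ 0)
    (c : C) (hc : c = g.det)
    (hnil : ¬ IsNilpotent c) :
    ∃ b : Module.Basis (Fin n) (Localization (Submonoid.powers c))
        (LocalizedModule (Submonoid.powers c) R),
      ∀ i, b i = LocalizedModule.mkLinearMap (Submonoid.powers c) R (v i) :=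
  basis_localizedModule_of_exhausts_of_not_isNilpotent_gram_det_general C R T n v g hg hexh c hc
end

section
/- Let E be a finite set, and suppose given finite index sets I and J together with maps t₁, t₂, t₃ : I → E and d, s : J → E (respectively encoding the unfolded triangles, with sides t₁(i), t₂(i), t₃(i), and the folded triangles, with doubled edge d(j) and remaining edge s(j), of an ideal triangulation with edge set E). Then for every odd natural number N, the residue map sending an admissible coloring f : E → ℕ to the tuple (f(a) mod N)_{a ∈ E} ∈ (ZMod N)^E is surjective: for every h : E → ZMod N there exists an admissible f : E → ℕ with f(a) ≡ h(a) (mod N) for all a ∈ E. -/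
/-- **Surjectivity of the residue map on admissible colorings.**
Let `E` be a finite set of edges, `I` (resp. `J`) finite index sets of unfolded
(resp. folded) triangles, with side maps `t₁ t₂ t₃ : I → E` and `d s : J → E`
(`d j` the doubled edge, `s j` the remaining edge).  For every odd `N`, the map
sending an admissible coloring `f : E → ℕ` to its tuple of residues mod `N` in
`(ZMod N)^E` is onto: every `h : E → ZMod N` is realized by an admissible `f`. -/
theorem residue_map_surjective_on_admissible_colorings
    (E I J : Type*) [Fintype E] [Fintype I] [Fintype J]
    (t₁ t₂ t₃ : I → E) (d s : J → E)
    (N : ℕ) (hN : Odd N) (h : E → ZMod N) :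
    ∃ f : E → ℕ,
      ((∀ i : I,
          Even (f (t₁ i) + f (t₂ i) + f (t₃ i)) ∧
          f (t₁ i) ≤ f (t₂ i) + f (t₃ i) ∧
          f (t₂ i) ≤ f (t₁ i) + f (t₃ i) ∧
          f (t₃ i) ≤ f (t₁ i) + f (t₂ i)) ∧
        (∀ j : J, Even (f (s j)) ∧ f (s j) ≤ 2 * f (d j))) ∧
      (∀ a : E, (f a : ZMod N) = h a) := by
  have hNpos : 0 < N := hN.pos
  haveI : NeZero N := ⟨hNpos.ne'⟩
  set f : E → ℕ := fun a =>
    (h a).val + (if Even (h a).val then 0 else N) + 2 * N with hf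
  have heven : ∀ a, Even (f a) := by
    intro a
    by_cases hp : Even (h a).val
    · simpa [f, hp] using (hp.add (even_two_mul N))
    · have : Odd (h a).val := Nat.odd_iff.mpr (Nat.not_even_iff.mp hp)
      simpa [f, hp] using ((this.add_odd hN).add (even_two_mul N))
  have hlb : ∀ a, 2 * N ≤ f a := by intro a; simp [f]
  have hub : ∀ a, f a < 4 * N := by
    intro a
    have := (h a).val_lt
    by_cases hp : Even (h a).val <;> simp [f, hp] <;> omega
  have hmod : ∀ a, (f a : ZMod N) = h a := by
    intro a
    by_cases hp : Even (h a).val <;>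
      simp [f, hp, ZMod.natCast_val, ZMod.cast_id]
  refine ⟨f, ⟨fun i => ?_, fun j => ?_⟩, hmod⟩
  · refine ⟨((heven _).add (heven _)).add (heven _), ?_, ?_, ?_⟩ <;>
    · have h1 := hlb (t₁ i); have h2 := hlb (t₂ i); have h3 := hlb (t₃ i)
      have u1 := hub (t₁ i); have u2 := hub (t₂ i); have u3 := hub (t₃ i)
      omega
  · have h1 := hlb (d j); have u := hub (s j)
    exact ⟨heven _, by omega⟩
end

section
/- For every integer p ≥ 3, the determinant of the 3(p−2)×3(p−2) integer matrix M_p described in the context equals 2^{2p−4} or −2^{2p−4}; equivalently, its absolute value is 2^{2(p−2)}. -/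
/-! The bottom diagonal block recording the intersection numbers of the curves
`u₁, …, u_{p-2}`, `x₁, …, x_{p-2}` and the puncture curves `∂₂, …, ∂_{p-1}` with
the edges triangulating the planar part of a surface with `p` punctures.

The matrix has size `3(p-2)`, its columns are grouped into `p-2` consecutive
triples, and its rows, in order, are `U₁, …, U_{p-2}`, `X₁, …, X_{p-2}`,
`D₁, …, D_{p-2}`:  row `Uᵢ` has `(1,1,0)` in the `i`-th triple; row `Xᵢ` has
`(2,0,2)` in each of the triples `1, …, i` and (when `i < p-2`) `(1,1,0)` in
triple `i+1`; row `D_j` has `(1,1,2)` in triple `j` and (when `j < p-2`)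
`(1,1,0)` in triple `j+1`.  All other entries are `0`. -/

/-- A length-3 row vector read at positions `0, 1, 2` (and `0` elsewhere). -/
def tripEnt (x y z : ℤ) : ℕ → ℤ
  | 0 => x
  | 1 => y
  | 2 => z
  | _ => 0

/-- The entry of the planar block matrix (with `n = p - 2`) in row `r` and
column `c` (both 0-indexed): rows `0, …, n-1` are `U₁, …, U_n`, rows
`n, …, 2n-1` are `X₁, …, X_n`, rows `2n, …, 3n-1` are `D₁, …, D_n`; column `c`
lies in triple `c / 3 + 1` at position `c % 3`. -/
def planarEntry (n r c : ℕ) : ℤ :=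
  let j := c / 3 + 1
  let pos := c % 3
  if r < n then (if j = r + 1 then tripEnt 1 1 0 pos else 0)
  else if r < 2 * n then
    (if j ≤ r - n + 1 then tripEnt 2 0 2 pos
     else if j = r - n + 2 then tripEnt 1 1 0 pos else 0)
  else
    (if j = r - 2 * n + 1 then tripEnt 1 1 2 pos
     else if j = r - 2 * n + 2 then tripEnt 1 1 0 pos else 0)

/-- The `3(p-2) × 3(p-2)` integer matrix `M_p` of the planar block for a surface
with `p` punctures. -/
def planarMatrix (p : ℕ) : Matrix (Fin (3 * (p - 2))) (Fin (3 * (p - 2))) ℤ :=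
  Matrix.of fun r c => planarEntry (p - 2) r.val c.val

def planarAux (n : ℕ) : Matrix (Fin (3*n)) (Fin (3*n)) ℤ :=
  Matrix.of fun r c => planarEntry n r.val c.val

lemma planarEntry_def (n r c : ℕ) : planarEntry n r c =
    (if r < n then (if c / 3 + 1 = r + 1 then tripEnt 1 1 0 (c % 3) else 0)
     else if r < 2 * n then
       (if c / 3 + 1 ≤ r - n + 1 then tripEnt 2 0 2 (c % 3)
        else if c / 3 + 1 = r - n + 2 then tripEnt 1 1 0 (c % 3) else 0)
     else
       (if c / 3 + 1 = r - 2 * n + 1 then tripEnt 1 1 2 (c % 3)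
        else if c / 3 + 1 = r - 2 * n + 2 then tripEnt 1 1 0 (c % 3) else 0)) := rfl

lemma aux_base : |(planarAux 1).det| = 4 := by
  have h := Matrix.det_submatrix_equiv_self
    (finCongr (by norm_num : (3:ℕ) = 3*1)) (planarAux 1)
  rw [← h, Matrix.det_fin_three]
  decide

set_option maxHeartbeats 2000000 in
lemma aux_step (n : ℕ) (hn : 1 ≤ n) :
    |(planarAux (n+1)).det| = 4 * |(planarAux n).det| := by
  classical
  set M := planarAux (n + 1) with hM
  have hi : 2 * n + 1 < 3 * (n + 1) := by omega
  have hj : 2 * n < 3 * (n + 1) := by omega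
  set M' := M.updateRow ⟨2*n+1, hi⟩ (M ⟨2*n+1, hi⟩ + (-1 : ℤ) • M ⟨2*n, hj⟩) with hM'
  have hdet : M'.det = M.det :=
    Matrix.det_updateRow_add_smul_self M
      (by simp only [ne_eq, Fin.mk.injEq]; omega) (-1)
  set ec : Fin (3*n) ⊕ Fin 3 ≃ Fin (3*(n+1)) :=
    finSumFinEquiv.trans (finCongr (by ring)) with hec
  set f : Fin (3*n) ⊕ Fin 3 → Fin (3*(n+1)) :=
    Sum.elim
      (fun k => ⟨if (k:ℕ) < n then (k:ℕ) else if (k:ℕ) < 2*n then (k:ℕ)+1 else (k:ℕ)+2,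
        by have := k.isLt; split_ifs <;> omega⟩)
      (fun j => ⟨if (j:ℕ) = 0 then n else if (j:ℕ) = 1 then 2*n+1 else 3*n+2,
        by split_ifs <;> omega⟩) with hf
  have hinj : Function.Injective f := by
    intro a b hab
    have hv : (f a).val = (f b).val := congrArg Fin.val hab
    rcases a with a | a <;> rcases b with b | b <;>
      simp only [hf, Sum.elim_inl, Sum.elim_inr] at hv
    · have ha := a.isLt; have hb := b.isLt
      exact congrArg Sum.inl (Fin.ext (by split_ifs at hv <;> omega))
    · exfalso; have ha := a.isLt; have hb := b.isLt; split_ifs at hv <;> omega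
    · exfalso; have ha := a.isLt; have hb := b.isLt; split_ifs at hv <;> omega
    · have ha := a.isLt; have hb := b.isLt
      exact congrArg Sum.inr (Fin.ext (by split_ifs at hv <;> omega))
  have hbij : Function.Bijective f := by
    rw [Fintype.bijective_iff_injective_and_card]
    refine ⟨hinj, ?_⟩
    simp only [Fintype.card_sum, Fintype.card_fin]; omega
  set er : Fin (3*n) ⊕ Fin 3 ≃ Fin (3*(n+1)) := Equiv.ofBijective f hbij with her
  have hMapp : ∀ x y, M x y = planarEntry (n+1) x.val y.val := fun _ _ => rfl
  have hcol : ∀ c : Fin (3*n), ((ec (Sum.inl c)) : ℕ) = (c : ℕ) := fun _ => rfl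
  have hcol' : ∀ j : Fin 3, ((ec (Sum.inr j)) : ℕ) = 3*n + (j : ℕ) := fun _ => rfl
  have hrowl : ∀ k : Fin (3*n), ((er (Sum.inl k)) : ℕ) =
      if (k:ℕ) < n then (k:ℕ) else if (k:ℕ) < 2*n then (k:ℕ)+1 else (k:ℕ)+2 := fun _ => rfl
  have hrowr : ∀ j : Fin 3, ((er (Sum.inr j)) : ℕ) =
      if (j:ℕ) = 0 then n else if (j:ℕ) = 1 then 2*n+1 else 3*n+2 := fun _ => rfl
  have hupd : ∀ s : Fin (3*n) ⊕ Fin 3, ((er s) : ℕ) ≠ 2*n+1 →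
      ∀ y, M' (er s) y = planarEntry (n+1) ((er s):ℕ) (y:ℕ) := by
    intro s hs y
    rw [hM', Matrix.updateRow_ne (Fin.ne_of_val_ne hs)]
    exact hMapp _ _
  have hupd1 : ∀ s : Fin (3*n) ⊕ Fin 3, er s = ⟨2*n+1, hi⟩ →
      ∀ y, M' (er s) y =
        planarEntry (n+1) (2*n+1) (y:ℕ) + (-1) * planarEntry (n+1) (2*n) (y:ℕ) := by
    intro s hs y
    rw [hs, hM', Matrix.updateRow_self, Pi.add_apply, Pi.smul_apply, smul_eq_mul,
      hMapp, hMapp]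
  have key : M'.submatrix er ec =
      Matrix.fromBlocks (planarAux n)
        (Matrix.of fun r c => M' (er (Sum.inl r)) (ec (Sum.inr c))) 0
        !![1,1,0;(1:ℤ),-1,2;1,1,2] := by
    ext r c
    rcases r with r | r <;> rcases c with c | c
    · -- A block
      have hr := r.isLt; have hc := c.isLt
      rw [Matrix.submatrix_apply, Matrix.fromBlocks_apply₁₁,
        hupd _ (by rw [hrowl]; split_ifs <;> omega), hrowl, hcol]
      show _ = planarEntry n (r:ℕ) (c:ℕ)
      rw [planarEntry_def, planarEntry_def]
      split_ifs <;> first | rfl | omega | (exfalso; omega)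
    · -- B block
      rw [Matrix.submatrix_apply, Matrix.fromBlocks_apply₁₂]; rfl
    · -- zero block
      have hc := c.isLt
      rw [Matrix.submatrix_apply, Matrix.fromBlocks_apply₂₁, Matrix.zero_apply]
      obtain rfl | rfl | rfl : r = 0 ∨ r = 1 ∨ r = 2 := by fin_cases r <;> decide
      · rw [hupd _ (by rw [hrowr]; norm_num; omega), hrowr, hcol]
        norm_num
        rw [planarEntry_def]
        split_ifs <;> first | rfl | omega | (exfalso; omega)
      · rw [hupd1 _ (Fin.ext (by rw [hrowr]; norm_num)), hcol]
        have e1 : planarEntry (n+1) (2*n+1) (c:ℕ) = tripEnt 2 0 2 ((c:ℕ) % 3) := by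
          rw [planarEntry_def]
          split_ifs <;> first | rfl | omega | (exfalso; omega)
        have e2 : planarEntry (n+1) (2*n) (c:ℕ) = tripEnt 2 0 2 ((c:ℕ) % 3) := by
          rw [planarEntry_def]
          split_ifs <;> first | rfl | omega | (exfalso; omega)
        rw [e1, e2]; ring
      · rw [hupd _ (by rw [hrowr]; norm_num; omega), hrowr, hcol]
        norm_num
        rw [planarEntry_def]
        split_ifs <;> first | rfl | omega | (exfalso; omega)
    · -- D block
      have hc := c.isLt
      rw [Matrix.submatrix_apply, Matrix.fromBlocks_apply₂₂]
      obtain rfl | rfl | rfl : r = 0 ∨ r = 1 ∨ r = 2 := by fin_cases r <;> decide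
      · rw [hupd _ (by rw [hrowr]; norm_num; omega), hrowr, hcol']
        norm_num
        rw [planarEntry_def,
          show (3*n + (c:ℕ))/3 = n by omega, show (3*n + (c:ℕ))%3 = (c:ℕ) by omega]
        rw [if_pos (by omega), if_pos rfl]
        obtain rfl | rfl | rfl : c = 0 ∨ c = 1 ∨ c = 2 := by fin_cases c <;> decide
        · first | rfl | decide
        · first | rfl | decide
        · first | rfl | decide
      · rw [hupd1 _ (Fin.ext (by rw [hrowr]; norm_num)), hcol']
        have e1 : planarEntry (n+1) (2*n+1) (3*n + (c:ℕ)) = tripEnt 2 0 2 (c:ℕ) := by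
          rw [planarEntry_def,
            show (3*n + (c:ℕ))/3 = n by omega, show (3*n + (c:ℕ))%3 = (c:ℕ) by omega]
          split_ifs <;> first | rfl | omega | (exfalso; omega)
        have e2 : planarEntry (n+1) (2*n) (3*n + (c:ℕ)) = tripEnt 1 1 0 (c:ℕ) := by
          rw [planarEntry_def,
            show (3*n + (c:ℕ))/3 = n by omega, show (3*n + (c:ℕ))%3 = (c:ℕ) by omega]
          split_ifs <;> first | rfl | omega | (exfalso; omega)
        rw [e1, e2]
        obtain rfl | rfl | rfl : c = 0 ∨ c = 1 ∨ c = 2 := by fin_cases c <;> decide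
        · first | rfl | decide
        · first | rfl | decide
        · first | rfl | decide
      · rw [hupd _ (by rw [hrowr]; norm_num; omega), hrowr, hcol']
        norm_num
        rw [planarEntry_def,
          show (3*n + (c:ℕ))/3 = n by omega, show (3*n + (c:ℕ))%3 = (c:ℕ) by omega]
        rw [if_neg (by omega), if_neg (by omega), if_pos (by omega)]
        obtain rfl | rfl | rfl : c = 0 ∨ c = 1 ∨ c = 2 := by fin_cases c <;> decide
        · first | rfl | decide
        · first | rfl | decide
        · first | rfl | decide
  have habs := Matrix.abs_det_submatrix_equiv_equiv er ec M'
  rw [key, Matrix.det_fromBlocks_zero₂₁, hdet] at habs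
  have hDdet : (!![1,1,0;(1:ℤ),-1,2;1,1,2]).det = -4 := by
    rw [Matrix.det_fin_three]
    simp [Matrix.vecHead, Matrix.vecTail]
  rw [hDdet] at habs
  rw [← habs, abs_mul]
  norm_num [mul_comm]

lemma aux_abs (n : ℕ) (hn : 1 ≤ n) : |(planarAux n).det| = 2 ^ (2 * n) := by
  induction n, hn using Nat.le_induction with
  | base => rw [aux_base]; norm_num
  | succ n hn ih =>
      rw [aux_step n hn, ih, show 2 * (n + 1) = 2 * n + 2 by ring, pow_add]
      ring

/-- **Determinant of the planar block.**
For every integer `p ≥ 3`, the determinant of `M_p` equals `2 ^ (2p - 4)` or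
`-2 ^ (2p - 4)`; equivalently, its absolute value is `2 ^ (2(p-2))`. -/
theorem det_planarMatrix (p : ℕ) (hp : 3 ≤ p) :
    (planarMatrix p).det = 2 ^ (2 * p - 4) ∨ (planarMatrix p).det = -2 ^ (2 * p - 4) := by
  have hEq : planarMatrix p = planarAux (p - 2) := rfl
  have habs : |(planarMatrix p).det| = 2 ^ (2 * p - 4) := by
    rw [hEq, aux_abs (p-2) (by omega), show 2 * (p-2) = 2*p - 4 by omega]
  rcases (abs_eq (by positivity)).mp habs with h | h
  · exact Or.inl h
  · exact Or.inr h
end
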